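/- arXiv:hep-th/9502068 — 2 statements merged into one kernel-verified Lean document; each statement's English description precedes it below -/
import Mathlib

section
/- The vectors A_{ij}^{(n)} = tⁿE_{ij} + (-1)^{i+j+1+nN} t^{-n}E_{ji} for 1 ≤ i < j ≤ N, n ∈ Z, together with G_i^{(n)} = tⁿH_i + (-1)^{nN+1} t^{-n}H_i for 1 ≤ i ≤ N-1, n ≥ 1, form a basis of the fixed-point subalgebra Ã_N of ω in L(sl(N)). -/
/-! In characteristic zero the fixed points of an involution `ω` are exactly the image of `ω + 1`,
which is spanned by the vectors `ω x + x` for `x` in any spanning set. For the spanning set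
`tⁿE_{ij}`, `tⁿH_k` of the loop algebra these vectors are `A_{ij}^{(n)}` and `G_k^{(n)}`, and those
with `i > j` or `n ≤ 0` are multiples of the listed ones (or zero).

Linear independence comes from a biorthogonal family of coefficient functionals: the
`tⁿ`-coefficient of the `(i, j)` entry for `A_{ij}^{(n)}`, and the sum of the `tⁿ`-coefficients of
the diagonal entries up to `k` for `G_k^{(n)}`, whose diagonal in degree `n ≥ 1` is
`e_k - e_{k+1}`. -/

noncomputable section
open Matrix LaurentPolynomial

attribute [local instance] LieRing.ofAssociativeRing

/-- The (gl) loop algebra: matrices over Laurent polynomials. -/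
abbrev gl (N : ℕ) := Matrix (Fin N) (Fin N) (LaurentPolynomial ℂ)

/-- The traceless part: the `sl(N)` loop algebra, as a Lie subalgebra over ℂ. -/
def slC (N : ℕ) : LieSubalgebra ℂ (gl N) where
  carrier := {A | Matrix.trace A = 0}
  add_mem' := by
    intro a b ha hb
    simp only [Set.mem_setOf_eq] at *
    rw [Matrix.trace_add, ha, hb, add_zero]
  zero_mem' := by simp
  smul_mem' := by
    intro c A hA
    simp only [Set.mem_setOf_eq] at *
    rw [Matrix.trace_smul, hA, smul_zero]
  lie_mem' := by
    intro x y hx hy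
    simp only [Set.mem_setOf_eq] at *
    rw [Ring.lie_def, Matrix.trace_sub, Matrix.trace_mul_comm, sub_self]

/-- Basis element `tⁿ E_{ij}` (for `i ≠ j`) of the `sl(N)` loop algebra. -/
def TE (N : ℕ) (n : ℤ) (i j : Fin N) (h : i ≠ j) : slC N :=
  ⟨(T n : LaurentPolynomial ℂ) • Matrix.single i j (1 : LaurentPolynomial ℂ), by
    show Matrix.trace _ = 0
    rw [Matrix.trace_smul, Matrix.trace_single_eq_of_ne i j _ h, smul_zero]⟩

/-- Basis element `tⁿ H_k = tⁿ (E_{kk} - E_{k+1,k+1})` of the `sl(N)` loop algebra. -/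
def TH (N : ℕ) (n : ℤ) (k : Fin N) (hk : (k : ℕ) + 1 < N) : slC N :=
  ⟨(T n : LaurentPolynomial ℂ) • (Matrix.single k k (1 : LaurentPolynomial ℂ)
      - Matrix.single (⟨(k : ℕ) + 1, hk⟩ : Fin N) (⟨(k : ℕ) + 1, hk⟩ : Fin N) 1), by
    show Matrix.trace _ = 0
    rw [Matrix.trace_smul, Matrix.trace_sub, Matrix.trace_single_eq_same,
      Matrix.trace_single_eq_same, sub_self, smul_zero]⟩


/-- The fixed vector `A_{ij}^{(n)} = tⁿE_{ij} + (-1)^{i+j+1+nN} t^{-n}E_{ji}`. -/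
def Abasis (N : ℕ) (n : ℤ) (i j : Fin N) (h : i ≠ j) : ↥(slC N) :=
  TE N n i j h
    + (((-1 : ℂ) ^ ((i : ℕ) + (j : ℕ) + 1)) * ((-1 : ℂ) ^ (n * (N : ℤ)))) • TE N (-n) j i h.symm

/-- The fixed vector `G_k^{(n)} = tⁿH_k + (-1)^{nN+1} t^{-n}H_k`. -/
def Gbasis (N : ℕ) (n : ℤ) (k : Fin N) (hk : (k : ℕ) + 1 < N) : ↥(slC N) :=
  TH N n k hk - ((-1 : ℂ) ^ (n * (N : ℤ))) • TH N (-n) k hk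

/-- The index set for the claimed basis of the fixed-point subalgebra: pairs `(n, (i,j))` with
`i < j` and `n ∈ ℤ`, together with pairs `(n, k)` with `n ≥ 1` and `1 ≤ k ≤ N-1`. -/
def BIdx (N : ℕ) :=
  (ℤ × {p : Fin N × Fin N // p.1 < p.2}) ⊕ ({n : ℤ // 1 ≤ n} × {k : Fin N // (k : ℕ) + 1 < N})

/-- The claimed basis vectors `A_{ij}^{(n)}` and `G_k^{(n)}` of the fixed-point subalgebra. -/
def bvec (N : ℕ) : BIdx N → ↥(slC N)
  | .inl (n, ⟨(i, j), hij⟩) => Abasis N n i j (ne_of_lt hij)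
  | .inr (⟨n, _⟩, ⟨k, hk⟩) => Gbasis N n k hk

theorem linearIndependent_of_biorthogonal {R M ι : Type*} [Semiring R] [AddCommMonoid M]
    [Module R M] {v : ι → M} (f : ι → M →ₗ[R] R) (hf_self : ∀ i, f i (v i) = 1)
    (hf_ne : ∀ i j, i ≠ j → f i (v j) = 0) : LinearIndependent R v := by
  classical
  refine LinearIndependent.of_comp (LinearMap.pi f) ?_
  have h : LinearMap.pi f ∘ v = fun j => Pi.single j (1 : R) := by
    ext j i
    by_cases hij : i = j
    · subst hij
      simp [hf_self]
    · simp [hf_ne i j hij, hij]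
  rw [h]
  exact Pi.linearIndependent_single_one ι R

theorem sub_mem_of_forall_sub_succ_mem {M : Type*} [AddCommGroup M] {W : AddSubgroup M} {N : ℕ}
    {v : Fin N → M} (hv : ∀ (k : Fin N) (hk : (k : ℕ) + 1 < N), v k - v ⟨k + 1, hk⟩ ∈ W)
    (i j : Fin N) : v i - v j ∈ W := by
  have h_zero : ∀ (m : ℕ) (hm : m < N), v ⟨0, by omega⟩ - v ⟨m, hm⟩ ∈ W := by
    intro m
    induction m with
    | zero => intro hm; simp
    | succ m ih =>
      intro hm
      simpa using W.add_mem (ih (by omega)) (hv ⟨m, by omega⟩ hm)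
  simpa using W.sub_mem (h_zero j j.2) (h_zero i i.2)

theorem sum_smul_mem_of_sub_mem {R M ι : Type*} [Ring R] [AddCommGroup M] [Module R M]
    [Fintype ι] {W : Submodule R M} {v : ι → M} (hv : ∀ i j, v i - v j ∈ W) {d : ι → R}
    (hd : ∑ i, d i = 0) : ∑ i, d i • v i ∈ W := by
  cases isEmpty_or_nonempty ι with
  | inl _ => simp
  | inr h =>
    obtain ⟨z⟩ := h
    have : ∑ i, d i • v i = ∑ i, d i • (v i - v z) := by
      simp [smul_sub, Finset.sum_sub_distrib, ← Finset.sum_smul, hd]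
    rw [this]
    exact W.sum_mem fun i _ => W.smul_mem _ (hv i z)

theorem LinearMap.ker_sub_id_eq_range_add_id {K M : Type*} [DivisionRing K] [CharZero K]
    [AddCommGroup M] [Module K M] {φ : M →ₗ[K] M} (hφ : Function.Involutive φ) :
    ker (φ - id) = range (φ + id) := by
  ext x
  simp only [mem_ker, mem_range, sub_apply, add_apply, id_apply, sub_eq_zero]
  constructor
  · intro hx
    refine ⟨(2 : K)⁻¹ • x, ?_⟩
    rw [map_smul, hx, ← add_smul]
    norm_num
  · rintro ⟨y, rfl⟩
    rw [map_add, hφ y, add_comm]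

def chevalleySet (R : Type*) [Ring R] (N : ℕ) : Set (Matrix (Fin N) (Fin N) R) :=
  {A | (∃ i j, i ≠ j ∧ Matrix.single i j 1 = A) ∨
    ∃ (k : Fin N) (hk : (k : ℕ) + 1 < N),
      Matrix.single k k 1 - Matrix.single ⟨k + 1, hk⟩ ⟨k + 1, hk⟩ 1 = A}

theorem mem_span_chevalleySet_of_trace_eq_zero {R : Type*} [CommRing R] {N : ℕ}
    {M : Matrix (Fin N) (Fin N) R} (hM : M.trace = 0) :
    M ∈ Submodule.span R (chevalleySet R N) := by
  set W := Submodule.span R (chevalleySet R N)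
  have h_single (i j : Fin N) (a : R) : single i j a = a • single i j 1 := by simp
  have h_offDiag : M - diagonal M.diag ∈ W := by
    rw [matrix_eq_sum_single (M - diagonal M.diag)]
    refine W.sum_mem fun i _ => W.sum_mem fun j _ => ?_
    by_cases hij : i = j
    · simp [hij]
    · rw [h_single]
      exact W.smul_mem _ (Submodule.subset_span (Or.inl ⟨i, j, hij, rfl⟩))
  have h_diag : diagonal M.diag ∈ W := by
    rw [← sum_single_eq_diagonal]
    simp_rw [h_single _ _ (M.diag _)]
    refine sum_smul_mem_of_sub_mem (sub_mem_of_forall_sub_succ_mem (W := W.toAddSubgroup) ?_) hM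
    exact fun k hk => Submodule.subset_span (Or.inr ⟨k, hk, rfl⟩)
  simpa using W.add_mem h_offDiag h_diag

theorem LaurentPolynomial.span_range_T (R : Type*) [Semiring R] :
    Submodule.span R (Set.range (T : ℤ → R[T;T⁻¹])) = ⊤ := by
  have h : (T : ℤ → R[T;T⁻¹]) = AddMonoidAlgebra.basis ℤ R :=
    funext fun n => (AddMonoidAlgebra.basis_apply R n).symm
  rw [h]
  exact (AddMonoidAlgebra.basis ℤ R).span_eq

def loopChevalleySet (N : ℕ) : Set (slC N) :=
  {x | (∃ n i j h, TE N n i j h = x) ∨ ∃ n k hk, TH N n k hk = x}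

theorem span_loopChevalleySet (N : ℕ) : Submodule.span ℂ (loopChevalleySet N) = ⊤ := by
  rw [eq_top_iff]
  rintro x -
  let incl := (slC N).toSubmodule.subtype
  have hx : (x : gl N) ∈ Submodule.span ℂ (incl '' loopChevalleySet N) := by
    have hx_span := mem_span_chevalleySet_of_trace_eq_zero x.2
    rw [← Submodule.restrictScalars_mem ℂ,
      ← Submodule.span_smul_of_span_eq_top (LaurentPolynomial.span_range_T ℂ)] at hx_span
    refine Submodule.span_mono ?_ hx_span
    rintro _ ⟨_, ⟨n, rfl⟩, A, hA, rfl⟩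
    rcases hA with ⟨i, j, h, rfl⟩ | ⟨k, hk, rfl⟩
    · exact ⟨TE N n i j h, Or.inl ⟨n, i, j, h, rfl⟩, rfl⟩
    · exact ⟨TH N n k hk, Or.inr ⟨n, k, hk, rfl⟩, rfl⟩
  rw [Submodule.span_image] at hx
  obtain ⟨y, hy, hyx⟩ := hx
  rwa [← Subtype.ext hyx]

theorem neg_one_zpow_mul_neg (n : ℤ) (N : ℕ) :
    (-1 : ℂ) ^ (n * (N : ℤ)) * (-1) ^ (-n * (N : ℤ)) = 1 := by
  rw [neg_mul, _root_.zpow_neg, mul_inv_cancel₀ (zpow_ne_zero _ (by norm_num))]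

theorem offDiag_sign_mul_swap (N : ℕ) (n : ℤ) (a b : ℕ) :
    ((-1 : ℂ) ^ (a + b + 1) * (-1) ^ (n * (N : ℤ))) *
      ((-1) ^ (b + a + 1) * (-1) ^ (-n * (N : ℤ))) = 1 := by
  rw [mul_mul_mul_comm, ← pow_add, add_comm b a, ← two_mul, pow_mul, neg_one_sq, one_pow,
    one_mul, neg_one_zpow_mul_neg]

theorem Abasis_swap (N : ℕ) (n : ℤ) (i j : Fin N) (h : i ≠ j) :
    Abasis N n i j h =
      ((-1 : ℂ) ^ ((i : ℕ) + (j : ℕ) + 1) * (-1) ^ (n * (N : ℤ))) • Abasis N (-n) j i h.symm := by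
  rw [Abasis, Abasis, neg_neg, smul_add, smul_smul, offDiag_sign_mul_swap, one_smul, add_comm]

theorem Gbasis_neg (N : ℕ) (n : ℤ) (k : Fin N) (hk : (k : ℕ) + 1 < N) :
    Gbasis N n k hk = (-(-1 : ℂ) ^ (n * (N : ℤ))) • Gbasis N (-n) k hk := by
  rw [Gbasis, Gbasis, neg_neg, smul_sub, smul_smul, neg_mul, neg_one_zpow_mul_neg, neg_smul,
    neg_smul, one_smul]
  abel

theorem Abasis_mem_span_bvec (N : ℕ) (n : ℤ) (i j : Fin N) (h : i ≠ j) :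
    Abasis N n i j h ∈ Submodule.span ℂ (Set.range (bvec N)) := by
  rcases h.lt_or_gt with hij | hji
  · exact Submodule.subset_span ⟨.inl (n, ⟨(i, j), hij⟩), rfl⟩
  · rw [Abasis_swap]
    exact Submodule.smul_mem _ _ (Submodule.subset_span ⟨.inl (-n, ⟨(j, i), hji⟩), rfl⟩)

theorem Gbasis_mem_span_bvec (N : ℕ) (n : ℤ) (k : Fin N) (hk : (k : ℕ) + 1 < N) :
    Gbasis N n k hk ∈ Submodule.span ℂ (Set.range (bvec N)) := by
  rcases lt_trichotomy n 0 with hn | rfl | hn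
  · rw [Gbasis_neg]
    exact Submodule.smul_mem _ _
      (Submodule.subset_span ⟨.inr (⟨-n, by omega⟩, ⟨k, hk⟩), rfl⟩)
  · simp [Gbasis]
  · exact Submodule.subset_span ⟨.inr (⟨n, hn⟩, ⟨k, hk⟩), rfl⟩

def IsOmega (N : ℕ) (ω : slC N →ₗ[ℂ] slC N) : Prop :=
  (∀ (n : ℤ) (i j : Fin N) (h : i ≠ j),
    ω (TE N n i j h) =
      ((-1 : ℂ) ^ ((i : ℕ) + (j : ℕ) + 1) * (-1) ^ (n * (N : ℤ))) • TE N (-n) j i h.symm) ∧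
  ∀ (n : ℤ) (k : Fin N) (hk : (k : ℕ) + 1 < N),
    ω (TH N n k hk) = (-(-1 : ℂ) ^ (n * (N : ℤ))) • TH N (-n) k hk

namespace IsOmega

variable {N : ℕ} {ω : slC N →ₗ[ℂ] slC N}

theorem map_TE_add_self (hω : IsOmega N ω) (n : ℤ) (i j : Fin N) (h : i ≠ j) :
    (ω + LinearMap.id : slC N →ₗ[ℂ] slC N) (TE N n i j h) = Abasis N n i j h := by
  rw [LinearMap.add_apply, LinearMap.id_apply, hω.1, add_comm]
  rfl

theorem map_TH_add_self (hω : IsOmega N ω) (n : ℤ) (k : Fin N) (hk : (k : ℕ) + 1 < N) :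
    (ω + LinearMap.id : slC N →ₗ[ℂ] slC N) (TH N n k hk) = Gbasis N n k hk := by
  rw [LinearMap.add_apply, LinearMap.id_apply, hω.2, neg_smul, neg_add_eq_sub]
  rfl

theorem involutive (hω : IsOmega N ω) : Function.Involutive ω := by
  have h : ω ∘ₗ ω = LinearMap.id := by
    refine LinearMap.ext_on (span_loopChevalleySet N) ?_
    rintro _ (⟨n, i, j, h, rfl⟩ | ⟨n, k, hk, rfl⟩)
    · simp only [LinearMap.comp_apply, LinearMap.id_apply, hω.1, map_smul, neg_neg, smul_smul]
      rw [offDiag_sign_mul_swap, one_smul]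
    · simp only [LinearMap.comp_apply, LinearMap.id_apply, hω.2, map_smul, neg_neg, smul_smul,
        neg_mul_neg, neg_one_zpow_mul_neg, one_smul]
  exact fun x => LinearMap.congr_fun h x

theorem range_add_id (hω : IsOmega N ω) :
    LinearMap.range (ω + LinearMap.id) = Submodule.span ℂ (Set.range (bvec N)) := by
  rw [LinearMap.range_eq_map, ← span_loopChevalleySet N, Submodule.map_span]
  apply le_antisymm <;> rw [Submodule.span_le]
  · rintro _ ⟨_, ⟨n, i, j, h, rfl⟩ | ⟨n, k, hk, rfl⟩, rfl⟩
    · rw [SetLike.mem_coe, hω.map_TE_add_self]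
      exact Abasis_mem_span_bvec N n i j h
    · rw [SetLike.mem_coe, hω.map_TH_add_self]
      exact Gbasis_mem_span_bvec N n k hk
  · rintro _ ⟨⟨n, ⟨⟨i, j⟩, hij⟩⟩ | ⟨⟨n, hn⟩, ⟨k, hk⟩⟩, rfl⟩
    · exact Submodule.subset_span
        ⟨TE N n i j hij.ne, Or.inl ⟨n, i, j, hij.ne, rfl⟩, hω.map_TE_add_self n i j hij.ne⟩
    · exact Submodule.subset_span
        ⟨TH N n k hk, Or.inr ⟨n, k, hk, rfl⟩, hω.map_TH_add_self n k hk⟩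

end IsOmega

def entryCoeff (N : ℕ) (i j : Fin N) (n : ℤ) : slC N →ₗ[ℂ] ℂ :=
  (AddMonoidAlgebra.basis ℤ ℂ).coord n ∘ₗ Matrix.entryLinearMap ℂ (LaurentPolynomial ℂ) i j ∘ₗ
    (slC N).toSubmodule.subtype

theorem entryCoeff_apply (N : ℕ) (i j : Fin N) (n : ℤ) (x : slC N) :
    entryCoeff N i j n x = ((x : gl N) i j).coeff n := rfl

theorem entryCoeff_TE {N : ℕ} (i j : Fin N) (n m : ℤ) (a b : Fin N) (h : a ≠ b) :
    entryCoeff N i j n (TE N m a b h) = if a = i ∧ b = j ∧ m = n then 1 else 0 := by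
  simp only [entryCoeff_apply, TE, Matrix.smul_apply, Matrix.single_apply]
  split_ifs <;> simp_all

theorem entryCoeff_TE_self {N : ℕ} (i : Fin N) (n m : ℤ) (a b : Fin N) (h : a ≠ b) :
    entryCoeff N i i n (TE N m a b h) = 0 := by
  rw [entryCoeff_TE, if_neg (by rintro ⟨rfl, rfl, -⟩; exact h rfl)]

theorem entryCoeff_TH_of_ne {N : ℕ} {i j : Fin N} (hij : i ≠ j) (n m : ℤ) (k : Fin N)
    (hk : (k : ℕ) + 1 < N) : entryCoeff N i j n (TH N m k hk) = 0 := by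
  simp only [entryCoeff_apply, TH, Matrix.smul_apply, Matrix.sub_apply, Matrix.single_apply]
  rw [if_neg fun h => hij (h.1.symm.trans h.2), if_neg fun h => hij (h.1.symm.trans h.2)]
  simp

theorem entryCoeff_TH_self {N : ℕ} (i : Fin N) (n m : ℤ) (k : Fin N) (hk : (k : ℕ) + 1 < N) :
    entryCoeff N i i n (TH N m k hk) =
      if m = n then (if k = i then 1 else 0) - (if ⟨k + 1, hk⟩ = i then 1 else 0) else 0 := by
  simp only [entryCoeff_apply, TH, Matrix.smul_apply, Matrix.sub_apply, Matrix.single_apply]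
  split_ifs <;> simp_all

theorem entryCoeff_Abasis_of_lt {N : ℕ} {i j a b : Fin N} (hij : i < j) (hab : a < b) (n m : ℤ) :
    entryCoeff N i j n (Abasis N m a b hab.ne) = if a = i ∧ b = j ∧ m = n then 1 else 0 := by
  have h_swap : ¬(b = i ∧ a = j ∧ -m = n) := by
    rintro ⟨rfl, rfl, -⟩
    exact lt_asymm hij hab
  simp only [Abasis, map_add, map_smul, entryCoeff_TE, if_neg h_swap, smul_zero, add_zero]

theorem sum_Iic_entryCoeff_Gbasis {N : ℕ} {n m : ℤ} (hn : 1 ≤ n) (hm : 1 ≤ m) (k k' : Fin N)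
    (hk' : (k' : ℕ) + 1 < N) :
    (∑ c ∈ Finset.Iic k, entryCoeff N c c n) (Gbasis N m k' hk') =
      if m = n ∧ k' = k then 1 else 0 := by
  have hmn : -m ≠ n := by omega
  simp only [Gbasis, LinearMap.sum_apply, map_sub, map_smul, entryCoeff_TH_self, if_neg hmn,
    Finset.sum_const_zero, smul_zero, sub_zero, Finset.sum_ite_irrel, Finset.sum_sub_distrib,
    Finset.sum_ite_eq, Finset.mem_Iic]
  simp only [Fin.le_iff_val_le_val, Fin.ext_iff]
  split_ifs <;> first | omega | norm_num

def bvecDual (N : ℕ) : BIdx N → (slC N →ₗ[ℂ] ℂ)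
  | .inl (n, ⟨(i, j), _⟩) => entryCoeff N i j n
  | .inr (⟨n, _⟩, ⟨k, _⟩) => ∑ c ∈ Finset.Iic k, entryCoeff N c c n

theorem bvecDual_bvec_self (N : ℕ) (a : BIdx N) : bvecDual N a (bvec N a) = 1 := by
  rcases a with ⟨n, ⟨⟨i, j⟩, hij⟩⟩ | ⟨⟨n, hn⟩, ⟨k, hk⟩⟩
  · exact (entryCoeff_Abasis_of_lt hij hij n n).trans (if_pos ⟨rfl, rfl, rfl⟩)
  · exact (sum_Iic_entryCoeff_Gbasis hn hn k k hk).trans (if_pos ⟨rfl, rfl⟩)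

theorem bvecDual_bvec_of_ne (N : ℕ) {a b : BIdx N} (hab : a ≠ b) :
    bvecDual N a (bvec N b) = 0 := by
  rcases a with ⟨n, ⟨⟨i, j⟩, hij⟩⟩ | ⟨⟨n, hn⟩, ⟨k, hk⟩⟩ <;>
    rcases b with ⟨m, ⟨⟨a, b⟩, hab'⟩⟩ | ⟨⟨m, hm⟩, ⟨k', hk'⟩⟩
  · refine (entryCoeff_Abasis_of_lt hij hab' n m).trans (if_neg ?_)
    rintro ⟨rfl, rfl, rfl⟩
    exact hab rfl
  · show entryCoeff N i j n (Gbasis N m k' hk') = 0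
    simp [Gbasis, entryCoeff_TH_of_ne hij.ne]
  · show (∑ c ∈ Finset.Iic k, entryCoeff N c c n) (Abasis N m a b hab'.ne) = 0
    simp [Abasis, entryCoeff_TE_self]
  · refine (sum_Iic_entryCoeff_Gbasis hn hm k k' hk').trans (if_neg ?_)
    rintro ⟨rfl, rfl⟩
    exact hab rfl

theorem linearIndependent_bvec (N : ℕ) : LinearIndependent ℂ (bvec N) :=
  linearIndependent_of_biorthogonal (bvecDual N) (bvecDual_bvec_self N)
    fun _ _ => bvecDual_bvec_of_ne N

theorem basis_of_fixed_point_subalgebra_general (N : ℕ)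
    (ω : ↥(slC N) →ₗ[ℂ] ↥(slC N))
    (hωE : ∀ (n : ℤ) (i j : Fin N) (h : i ≠ j),
      ω (TE N n i j h)
        = (((-1 : ℂ) ^ ((i : ℕ) + (j : ℕ) + 1)) * ((-1 : ℂ) ^ (n * (N : ℤ)))) •
            TE N (-n) j i h.symm)
    (hωH : ∀ (n : ℤ) (k : Fin N) (hk : (k : ℕ) + 1 < N),
      ω (TH N n k hk) = (-((-1 : ℂ) ^ (n * (N : ℤ)))) • TH N (-n) k hk)
    :
    LinearIndependent ℂ (bvec N) ∧
    Submodule.span ℂ (Set.range (bvec N)) = LinearMap.ker (ω - LinearMap.id) := by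
  have hω : IsOmega N ω := ⟨hωE, hωH⟩
  rw [LinearMap.ker_sub_id_eq_range_add_id hω.involutive, hω.range_add_id]
  exact ⟨linearIndependent_bvec N, rfl⟩

/-- The vectors `A_{ij}^{(n)}` (`1 ≤ i < j ≤ N`, `n ∈ ℤ`) together with
`G_k^{(n)}` (`1 ≤ k ≤ N-1`, `n ≥ 1`) form a basis of the fixed-point subalgebra `Ã_N`
of `ω`: they are linearly independent and span the fixed-point set of `ω`. -/
theorem basis_of_fixed_point_subalgebra (N : ℕ) (hN : 2 ≤ N)
    (ω : ↥(slC N) →ₗ[ℂ] ↥(slC N))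
    (hωE : ∀ (n : ℤ) (i j : Fin N) (h : i ≠ j),
      ω (TE N n i j h)
        = (((-1 : ℂ) ^ ((i : ℕ) + (j : ℕ) + 1)) * ((-1 : ℂ) ^ (n * (N : ℤ)))) •
            TE N (-n) j i h.symm)
    (hωH : ∀ (n : ℤ) (k : Fin N) (hk : (k : ℕ) + 1 < N),
      ω (TH N n k hk) = (-((-1 : ℂ) ^ (n * (N : ℤ)))) • TH N (-n) k hk)
    :
    LinearIndependent ℂ (bvec N) ∧
    Submodule.span ℂ (Set.range (bvec N)) = LinearMap.ker (ω - LinearMap.id) :=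
  basis_of_fixed_point_subalgebra_general N ω hωE hωH
end
end

section
/- Under the homomorphism π: A_N → L(sl(N)) sending e_i to ẽ_i (where ẽ_i = E_{i,i+1}+E_{i+1,i} for i < N and ẽ_N = tE_{N,1}+t⁻¹E_{1,N}), the image of the closed string S_i(Nm) is π(S_i(Nm)) = (t-(-1)^N t⁻¹)(t+(-1)^N t⁻¹)^{m-1}(E_{ii} - E_{i+1,i+1}) for all m ≥ 1 and 1 ≤ i ≤ N. In particular Σ_{i=1}^N π(S_i(Nm)) = 0. -/
/-! Call `p E_{ij} + q E_{ji}` an off-diagonal pair. Bracketing with `ẽ_k` lengthens a pair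
`(k+1, k+1+s)` to `(k, k+1+s)`, multiplying its coefficients by `t^{±1}` exactly when the step
is `ẽ_{N-1}`, and flipping the sign of the second one. After `N` steps the pair closes up and
the bracket lands in `C[t,t⁻¹] (E_{kk} - E_{k+1,k+1})`; one more bracket reopens it with the
same coefficient and the second sign flipped. Hence the first turn around the cycle, starting
from `ẽ_k`, produces `t - (-1)^N t⁻¹`, and each further turn multiplies by `t + (-1)^N t⁻¹`.
The sum vanishes because the `E_{ii}` telescope. -/

noncomputable section
open Matrix LaurentPolynomial
attribute [local instance 100] LieRing.ofAssociativeRing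

noncomputable section

/-- The generalized Dolan–Grady relations for a cyclic family `e` of `N` elements. -/
def DolanGrady {N : ℕ} [NeZero N] {L : Type*} [LieRing L] (e : Fin N → L) : Prop :=
  (∀ i j : Fin N, (j = i + 1 ∨ i = j + 1) → ⁅e i, ⁅e i, e j⁆⁆ = e j) ∧
  (∀ i j : Fin N, i ≠ j → j ≠ i + 1 → i ≠ j + 1 → ⁅e i, e j⁆ = 0)

/-- The right-nested string `S_k(r) = [e_k,[e_{k+1},...,e_{k+r-1}]...]`, with `S _ 0 = 0`. -/
def S {N : ℕ} [NeZero N] {L : Type*} [LieRing L] (e : Fin N → L) : ℕ → Fin N → L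
  | 0, _ => 0
  | 1, k => e k
  | (r + 2), k => ⁅e k, S e (r + 1) (k + 1)⁆

/-- The set of defining relators of the `sl(N)` Onsager algebra inside the free Lie algebra. -/
def OnsRels (N : ℕ) [NeZero N] : Set (FreeLieAlgebra ℂ (Fin N)) :=
  {x | ∃ i j : Fin N, (j = i + 1 ∨ i = j + 1) ∧
      x = ⁅FreeLieAlgebra.of ℂ i, ⁅FreeLieAlgebra.of ℂ i, FreeLieAlgebra.of ℂ j⁆⁆
            - FreeLieAlgebra.of ℂ j} ∪
  {x | ∃ i j : Fin N, i ≠ j ∧ j ≠ i + 1 ∧ i ≠ j + 1 ∧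
      x = ⁅FreeLieAlgebra.of ℂ i, FreeLieAlgebra.of ℂ j⁆}

/-- The Lie ideal generated by the Onsager relators. -/
def OnsIdeal (N : ℕ) [NeZero N] : LieIdeal ℂ (FreeLieAlgebra ℂ (Fin N)) :=
  LieSubmodule.lieSpan ℂ _ (OnsRels N)

/-- The `sl(N)` Onsager algebra, presented by generators and relations. -/
abbrev OnsAlg (N : ℕ) [NeZero N] := FreeLieAlgebra ℂ (Fin N) ⧸ OnsIdeal N

/-- The generators `e_i` of the `sl(N)` Onsager algebra. -/
def eGen (N : ℕ) [NeZero N] (i : Fin N) : OnsAlg N :=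
  LieSubmodule.Quotient.mk (N := OnsIdeal N) (FreeLieAlgebra.of ℂ i)


/-- The elements `ẽ_i` of the loop algebra: `ẽ_i = E_{i,i+1} + E_{i+1,i}` for `1 ≤ i ≤ N-1`,
and `ẽ_N = t E_{N,1} + t⁻¹ E_{1,N}` (0-based indices, cyclic successor `i + 1` in `Fin N`). -/
def etil (N : ℕ) [NeZero N] (i : Fin N) : gl N :=
  (T (if (i : ℕ) + 1 = N then 1 else 0) : LaurentPolynomial ℂ) • Matrix.single i (i + 1) 1 +
  (T (if (i : ℕ) + 1 = N then -1 else 0) : LaurentPolynomial ℂ) • Matrix.single (i + 1) i 1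

open Fin.NatCast Fin.CommRing

namespace Matrix

variable {n R : Type*} [Fintype n] [DecidableEq n] [CommRing R]

def offDiagPair (i j : n) (p q : R) : Matrix n n R :=
  p • single i j 1 + q • single j i 1

theorem lie_offDiagPair_offDiagPair {i j w : n} (hij : i ≠ j) (hjw : j ≠ w) (hiw : i ≠ w)
    (a a' p q : R) :
    ⁅offDiagPair i j a a', offDiagPair j w p q⁆ = offDiagPair i w (a * p) (-(a' * q)) := by
  simp only [offDiagPair, Ring.lie_def, add_mul, mul_add, smul_mul_assoc, mul_smul_comm,
    single_mul_single_same, single_mul_single_of_ne _ _ _ _ hjw,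
    single_mul_single_of_ne _ _ _ _ hij, single_mul_single_of_ne _ _ _ _ hij.symm,
    single_mul_single_of_ne _ _ _ _ hiw, single_mul_single_of_ne _ _ _ _ hiw.symm,
    single_mul_single_of_ne _ _ _ _ hjw.symm, mul_one, smul_zero]
  module

theorem lie_offDiagPair_offDiagPair_swap {i j : n} (hij : i ≠ j) (a a' p q : R) :
    ⁅offDiagPair i j a a', offDiagPair j i p q⁆
      = (a * p - a' * q) • (single i i 1 - single j j 1) := by
  simp only [offDiagPair, Ring.lie_def, add_mul, mul_add, smul_mul_assoc, mul_smul_comm,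
    single_mul_single_same, single_mul_single_of_ne _ _ _ _ hij,
    single_mul_single_of_ne _ _ _ _ hij.symm, mul_one, smul_zero]
  module

theorem lie_offDiagPair_smul_diag {i j l : n} (hij : i ≠ j) (hil : i ≠ l) (hjl : j ≠ l)
    (a a' c : R) :
    ⁅offDiagPair i j a a', c • (single j j 1 - single l l 1)⁆
      = offDiagPair i j (c * a) (-c * a') := by
  simp only [offDiagPair, Ring.lie_def, add_mul, mul_add, mul_sub, sub_mul, smul_mul_assoc,
    mul_smul_comm, smul_smul, smul_sub, single_mul_single_same,
    single_mul_single_of_ne _ _ _ _ hij, single_mul_single_of_ne _ _ _ _ hij.symm,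
    single_mul_single_of_ne _ _ _ _ hil, single_mul_single_of_ne _ _ _ _ hil.symm,
    single_mul_single_of_ne _ _ _ _ hjl, single_mul_single_of_ne _ _ _ _ hjl.symm,
    mul_one, smul_zero]
  module

end Matrix

open Matrix

section Strings

variable {N : ℕ} [NeZero N] {L : Type*} [LieRing L]

theorem S_succ (e : Fin N → L) {r : ℕ} (hr : 0 < r) (k : Fin N) :
    S e (r + 1) k = ⁅e k, S e r (k + 1)⁆ := by
  obtain ⟨r, rfl⟩ := Nat.exists_eq_add_of_lt hr
  rfl

theorem LieHom.map_S {R L' : Type*} [CommRing R] [LieAlgebra R L] [LieRing L'] [LieAlgebra R L']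
    (f : L →ₗ⁅R⁆ L') (e : Fin N → L) :
    ∀ (r : ℕ) (k : Fin N), f (S e r k) = S (f ∘ e) r k
  | 0, _ => map_zero f
  | 1, _ => rfl
  | r + 2, k => by rw [S, S, LieHom.map_lie, LieHom.map_S f e (r + 1) (k + 1)]; rfl

end Strings

theorem Fin.self_ne_add_natCast {N : ℕ} [NeZero N] (k : Fin N) {a : ℕ} (ha0 : 0 < a)
    (ha : a < N) : k ≠ k + a :=
  left_ne_add.mpr fun h => Nat.not_dvd_of_pos_of_lt ha0 ha (Fin.natCast_eq_zero.mp h)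

theorem Fin.self_ne_add_one {N : ℕ} [NeZero N] (hN : 2 ≤ N) (k : Fin N) : k ≠ k + 1 := by
  simpa only [Nat.cast_one] using Fin.self_ne_add_natCast k (a := 1) Nat.one_pos (by omega)

/-- The exponent of `t` collected by the string `ẽ_k, …, ẽ_{k+s-1}` (for `s ≤ N`): `1`
exactly when it contains `ẽ_{N-1}`, the only generator carrying `t`. -/
def wrap (N : ℕ) (k : Fin N) (s : ℕ) : ℤ := if N ≤ (k : ℕ) + s then 1 else 0

theorem wrap_self {N : ℕ} (k : Fin N) : wrap N k N = 1 := by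
  simp [wrap]

section LoopStrings

variable {N : ℕ} [NeZero N]

theorem wrap_one_add_wrap_succ (k : Fin N) {s : ℕ} (hs : s < N) :
    wrap N k 1 + wrap N (k + 1) s = wrap N k (s + 1) := by
  have hk := k.isLt
  have hk1 : ((k + 1 : Fin N) : ℕ) = ((k : ℕ) + 1) % N := by
    rw [Fin.val_add, Fin.val_one', Nat.add_mod_mod]
  unfold wrap
  rw [hk1]
  by_cases h : (k : ℕ) + 1 = N
  · rw [h, Nat.mod_self]; split_ifs <;> omega
  · rw [Nat.mod_eq_of_lt (by omega)]; split_ifs <;> omega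

theorem etil_eq_offDiagPair (k : Fin N) :
    etil N k = offDiagPair k (k + 1) (T (wrap N k 1)) (T (-wrap N k 1)) := by
  have hk := k.isLt
  unfold etil offDiagPair wrap
  by_cases h : (k : ℕ) + 1 = N
  · simp [h]
  · simp [h, show ¬ N ≤ (k : ℕ) + 1 by omega]

theorem S_etil_add_eq_offDiagPair {r : ℕ} {α β : LaurentPolynomial ℂ}
    (h : ∀ j, S (etil N) (r + 1) j
      = offDiagPair j (j + 1) (α * T (wrap N j 1)) (β * T (-wrap N j 1)))
    {s : ℕ} (hs : 1 ≤ s) (hsN : s < N) (k : Fin N) :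
    S (etil N) (r + s) k = offDiagPair k (k + (s : Fin N))
      (α * T (wrap N k s)) ((-1) ^ (s + 1) * β * T (-wrap N k s)) := by
  induction s, hs using Nat.le_induction generalizing k with
  | base => simpa using h k
  | succ s hs ih =>
    have hidx : k + 1 + (s : Fin N) = k + ((s + 1 : ℕ) : Fin N) := by push_cast; ring
    have hk1 : k + 1 ≠ k + 1 + (s : Fin N) := Fin.self_ne_add_natCast (k + 1) hs (by omega)
    have hks : k ≠ k + 1 + (s : Fin N) := hidx ▸ Fin.self_ne_add_natCast k s.succ_pos (by omega)
    rw [← add_assoc, S_succ _ (by omega), ih (by omega) (k + 1), etil_eq_offDiagPair,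
      lie_offDiagPair_offDiagPair (Fin.self_ne_add_one (by omega) k) hk1 hks, hidx,
      ← wrap_one_add_wrap_succ k (s := s) (by omega),
      neg_add, T_add, T_add]
    congr 1 <;> ring

theorem S_etil_add_N (hN : 2 ≤ N) {r : ℕ} {α β : LaurentPolynomial ℂ}
    (h : ∀ j, S (etil N) (r + 1) j
      = offDiagPair j (j + 1) (α * T (wrap N j 1)) (β * T (-wrap N j 1)))
    (k : Fin N) :
    S (etil N) (r + N) k
      = (α * T 1 - (-1) ^ N * β * T (-1)) • (single k k 1 - single (k + 1) (k + 1) 1) := by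
  have hidx : k + 1 + ((N - 1 : ℕ) : Fin N) = k := by
    rw [Nat.cast_sub (by omega), Fin.natCast_self]; ring
  have hwrap := wrap_one_add_wrap_succ k (s := N - 1) (by omega)
  rw [Nat.sub_add_cancel (by omega), wrap_self] at hwrap
  rw [show r + N = r + (N - 1) + 1 by omega, S_succ _ (by omega),
    S_etil_add_eq_offDiagPair h (by omega) (by omega), hidx, etil_eq_offDiagPair,
    lie_offDiagPair_offDiagPair_swap (Fin.self_ne_add_one hN k), Nat.sub_add_cancel (by omega)]
  congr 1
  rw [← hwrap, neg_add, T_add, T_add]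
  ring

theorem S_etil_succ_of_eq_smul (hN : 3 ≤ N) {r : ℕ} (hr : 0 < r) {c : LaurentPolynomial ℂ}
    (h : ∀ j, S (etil N) r j = c • (single j j 1 - single (j + 1) (j + 1) 1)) (k : Fin N) :
    S (etil N) (r + 1) k
      = offDiagPair k (k + 1) (c * T (wrap N k 1)) (-c * T (-wrap N k 1)) := by
  have hk2 : k ≠ k + 1 + 1 := by
    rw [add_assoc, one_add_one_eq_two, ← Nat.cast_ofNat]
    exact Fin.self_ne_add_natCast k two_pos (by omega)
  rw [S_succ _ hr, h, etil_eq_offDiagPair,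
    lie_offDiagPair_smul_diag (Fin.self_ne_add_one (by omega) k) hk2
      (Fin.self_ne_add_one (by omega) (k + 1))]

theorem S_etil_N_mul_succ (hN : 3 ≤ N) (m : ℕ) (k : Fin N) :
    S (etil N) (N * (m + 1)) k
      = (((T 1 : LaurentPolynomial ℂ) - (-1) ^ N * T (-1)) * (T 1 + (-1) ^ N * T (-1)) ^ m)
        • (single k k 1 - single (k + 1) (k + 1) 1) := by
  induction m generalizing k with
  | zero =>
    have hS1 : ∀ j, S (etil N) (0 + 1) j
        = offDiagPair j (j + 1) (1 * T (wrap N j 1)) (1 * T (-wrap N j 1)) := fun j =>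
      (etil_eq_offDiagPair j).trans (by rw [one_mul, one_mul])
    rw [show N * (0 + 1) = 0 + N by ring, S_etil_add_N (by omega) hS1]
    congr 1; ring
  | succ m ih =>
    rw [show N * (m + 1 + 1) = N * (m + 1) + N by ring,
      S_etil_add_N (by omega) (S_etil_succ_of_eq_smul hN (by positivity) ih)]
    congr 1; ring

end LoopStrings

/-- Under a Lie algebra homomorphism `π : A_N → L(sl(N))` with `π(e_i) = ẽ_i`,
the image of the closed string `S_i(Nm)` is
`(t - (-1)^N t⁻¹)(t + (-1)^N t⁻¹)^{m-1}(E_{ii} - E_{i+1,i+1})` for all `m ≥ 1`;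
in particular `Σ_{i=1}^N π(S_i(Nm)) = 0`. -/
theorem image_of_closed_strings (N : ℕ) (hN : 3 ≤ N) [NeZero N]
    (π : OnsAlg N →ₗ⁅ℂ⁆ gl N) (hπ : ∀ i : Fin N, π (eGen N i) = etil N i)
    (m : ℕ) (hm : 1 ≤ m) :
    (∀ i : Fin N,
      π (S (eGen N) (N * m) i)
        = ((((T 1 : LaurentPolynomial ℂ) - ((-1 : LaurentPolynomial ℂ) ^ N) * T (-1)) *
            ((T 1 : LaurentPolynomial ℂ) + ((-1 : LaurentPolynomial ℂ) ^ N) * T (-1)) ^ (m - 1))) •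
            (Matrix.single i i (1 : LaurentPolynomial ℂ) - Matrix.single (i + 1) (i + 1) 1)) ∧
    ∑ i : Fin N, π (S (eGen N) (N * m) i) = 0 := by
  obtain ⟨m, rfl⟩ := Nat.exists_eq_add_of_le' hm
  have hS : ∀ i, π (S (eGen N) (N * (m + 1)) i)
      = (((T 1 : LaurentPolynomial ℂ) - (-1) ^ N * T (-1)) * (T 1 + (-1) ^ N * T (-1)) ^ m)
        • (single i i 1 - single (i + 1) (i + 1) 1) := fun i => by
    rw [LieHom.map_S, show π ∘ eGen N = etil N from funext hπ, S_etil_N_mul_succ hN]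
  refine ⟨fun i => by rw [hS, Nat.add_sub_cancel], ?_⟩
  rw [Finset.sum_congr rfl fun i _ => hS i, ← Finset.smul_sum, Finset.sum_sub_distrib,
    Fintype.sum_equiv (Equiv.addRight 1) (fun i => single (i + 1) (i + 1) 1)
      (fun i => single i i (1 : LaurentPolynomial ℂ)) fun _ => rfl, sub_self, smul_zero]
end
end
end
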